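/- arXiv:1812.10600 — 6 statements merged into one kernel-verified Lean document; each statement's English description precedes it below -/
import Mathlib

section
/- Let p > 0, n a positive integer, α ∈ ℕⁿ, and t > 0. Then ∫_{{w ∈ ℂⁿ : ‖w‖^{2p} < t}} |w^α|² dV(w) = πⁿ · (∏ᵢ Γ(αᵢ+1)) · Γ((|α|+n)/p) / (p · Γ(|α|+n) · Γ((|α|+n)/p + 1)) · t^{(|α|+n)/p}, where |α| = α₁+⋯+αₙ and w^α = w₁^{α₁}⋯wₙ^{αₙ}. -/
open MeasureTheory Real

/-- Lebesgue measure on `ℂⁿ` with the Euclidean (Hermitian) norm. -/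
noncomputable instance withLpMeasureSpace {X : Type*} [MeasureTheory.MeasureSpace X]
    (p : ENNReal) : MeasureTheory.MeasureSpace (WithLp p X) where
  toMeasurableSpace := WithLp.measurableSpace p X
  volume := (MeasureTheory.volume : MeasureTheory.Measure X).map (WithLp.toLp p)

/-!
Let `μ` be Lebesgue measure on `ℂⁿ` weighted by `|w^α|²` and `N = |α| + n`. Since the weight is
homogeneous of degree `2|α|`, `μ {‖w‖² < s} = s^N · V` with `V = μ {‖w‖² < 1}`. Integrating
`exp (-‖w‖²)` against `μ` slice by slice (`exp (-y) = ∫_{s > y} exp (-s) ds` and Tonelli) gives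
`Γ(N+1) · V`, while Fubini splits the same Gaussian integral into one-variable integrals
`π · Γ(αᵢ + 1)`. This determines `V`; the stated formula follows with `s = t^{1/p}` and
`Γ(N+1) = N Γ(N)`.
-/

open Set Module
open scoped Pointwise

section LayerCake

variable {X : Type*} [MeasurableSpace X] (μ : Measure X) [SFinite μ] {f : X → ℝ}

theorem ofReal_exp_neg_eq_setLIntegral (y : ℝ) :
    ENNReal.ofReal (exp (-y)) = ∫⁻ s in Ioi y, ENNReal.ofReal (exp (-s)) := by
  rw [← integral_exp_neg_Ioi, ofReal_integral_eq_lintegral_ofReal (integrableOn_exp_neg_Ioi y)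
    (ae_of_all _ fun s => (exp_pos _).le)]

theorem lintegral_exp_neg_eq_lintegral_measure_lt (hf : Measurable f) :
    ∫⁻ x, ENNReal.ofReal (exp (-f x)) ∂μ = ∫⁻ s, μ {x | f x < s} * ENNReal.ofReal (exp (-s)) := by
  set H := {p : X × ℝ | f p.1 < p.2}.indicator fun p => ENNReal.ofReal (exp (-p.2))
  have hH : Measurable H :=
    (ENNReal.measurable_ofReal.comp (measurable_snd.neg.exp)).indicator
      (measurableSet_lt (hf.comp measurable_fst) measurable_snd)
  calc ∫⁻ x, ENNReal.ofReal (exp (-f x)) ∂μ = ∫⁻ x, (∫⁻ s, H (x, s)) ∂μ := by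
        refine lintegral_congr fun x => ?_
        rw [ofReal_exp_neg_eq_setLIntegral, ← lintegral_indicator measurableSet_Ioi]
        rfl
    _ = ∫⁻ s, ∫⁻ x, H (x, s) ∂μ :=
        lintegral_lintegral_swap (f := fun x s => H (x, s)) hH.aemeasurable
    _ = ∫⁻ s, μ {x | f x < s} * ENNReal.ofReal (exp (-s)) := by
        refine lintegral_congr fun s => ?_
        rw [mul_comm, ← lintegral_indicator_const (measurableSet_lt hf measurable_const)]
        rfl

theorem lintegral_exp_neg_eq_Gamma_mul_measure_lt_one (hf : Measurable f) (hf0 : ∀ x, 0 ≤ f x)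
    {N : ℝ} (hN : -1 < N)
    (hμ : ∀ s, 0 < s → μ {x | f x < s} = ENNReal.ofReal (s ^ N) * μ {x | f x < 1}) :
    ∫⁻ x, ENNReal.ofReal (exp (-f x)) ∂μ = ENNReal.ofReal (Gamma (N + 1)) * μ {x | f x < 1} := by
  have hsupp : Function.support (fun s => μ {x | f x < s} * ENNReal.ofReal (exp (-s))) ⊆ Ioi 0 := by
    intro s hs
    by_contra hs0
    have : {x | f x < s} = ∅ := eq_empty_of_forall_notMem fun x hx => hs0 ((hf0 x).trans_lt hx)
    simp [this] at hs
  have hGamma : ENNReal.ofReal (Gamma (N + 1))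
      = ∫⁻ s in Ioi 0, ENNReal.ofReal (s ^ N) * ENNReal.ofReal (exp (-s)) := by
    rw [Gamma_eq_integral (by linarith),
      ofReal_integral_eq_lintegral_ofReal (GammaIntegral_convergent (by linarith))
        ((ae_restrict_mem measurableSet_Ioi).mono fun s (hs : 0 < s) => by positivity),
      add_sub_cancel_right]
    refine setLIntegral_congr_fun measurableSet_Ioi fun s hs => ?_
    rw [mul_comm, ENNReal.ofReal_mul (rpow_nonneg (le_of_lt hs) _)]
  rw [lintegral_exp_neg_eq_lintegral_measure_lt μ hf, ← setLIntegral_eq_of_support_subset hsupp,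
    setLIntegral_congr_fun measurableSet_Ioi fun s hs => by
      rw [hμ s hs, mul_comm (ENNReal.ofReal _), mul_assoc],
    lintegral_const_mul _ (by fun_prop), hGamma, mul_comm]

end LayerCake

theorem smul_setOf_lt_of_homogeneous {E : Type*} [AddCommGroup E] [Module ℝ E] {g : E → ℝ} {b : ℕ}
    (hg : ∀ c, 0 < c → ∀ x, g (c • x) = c ^ b * g x) {c : ℝ} (hc : 0 < c) (s : ℝ) :
    c • {x | g x < s} = {x | g x < c ^ b * s} := by
  ext x
  rw [mem_smul_set_iff_inv_smul_mem₀ hc.ne']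
  show g (c⁻¹ • x) < s ↔ g x < c ^ b * s
  rw [hg _ (inv_pos.2 hc), inv_pow, inv_mul_lt_iff₀ (by positivity)]

theorem setIntegral_setOf_lt_of_homogeneous {E : Type*} [NormedAddCommGroup E] [NormedSpace ℝ E]
    [FiniteDimensional ℝ E] [MeasurableSpace E] [BorelSpace E] (μ : Measure E)
    [μ.IsAddHaarMeasure] {f g : E → ℝ} {a b : ℕ}
    (hf : ∀ c, 0 < c → ∀ x, f (c • x) = c ^ a * f x)
    (hg : ∀ c, 0 < c → ∀ x, g (c • x) = c ^ b * g x) {c : ℝ} (hc : 0 < c) (s : ℝ) :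
    ∫ x in {x | g x < c ^ b * s}, f x ∂μ
      = c ^ (a + finrank ℝ E) * ∫ x in {x | g x < s}, f x ∂μ := by
  have h := Measure.setIntegral_comp_smul_of_pos μ f {x | g x < s} hc
  rw [smul_setOf_lt_of_homogeneous hg hc, smul_eq_mul] at h
  simp only [hf c hc, integral_const_mul] at h
  rw [pow_add, mul_comm (c ^ a), mul_assoc, h, ← mul_assoc, mul_inv_cancel₀ (by positivity),
    one_mul]

theorem Complex.integral_norm_pow_mul_exp_neg_sq (k : ℕ) :
    ∫ z : ℂ, ‖z‖ ^ (2 * k) * rexp (-‖z‖ ^ 2) = π * Real.Gamma (k + 1) := by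
  have h := Complex.integral_rpow_mul_exp_neg_rpow (p := 2) (q := 2 * k) one_le_two
    (by linarith [k.cast_nonneg (α := ℝ)])
  rw [show (2 * (k : ℝ) + 2) / 2 = k + 1 by ring, show 2 * π / 2 = π by ring] at h
  rw [← h]
  congr with z
  rw [← rpow_natCast, ← rpow_natCast]
  push_cast
  rfl

section Monomial

variable {ι : Type*} [Fintype ι] (α : ι → ℕ)

theorem norm_prod_pow_sq (w : ι → ℂ) : ‖∏ i, w i ^ α i‖ ^ 2 = ∏ i, ‖w i‖ ^ (2 * α i) := by
  simp only [norm_prod, norm_pow, ← Finset.prod_pow, ← pow_mul, mul_comm]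

theorem norm_prod_smul_pow_sq (c : ℝ) (w : ι → ℂ) :
    ‖∏ i, (c • w) i ^ α i‖ ^ 2 = c ^ (2 * ∑ i, α i) * ‖∏ i, w i ^ α i‖ ^ 2 := by
  rw [norm_prod_pow_sq, norm_prod_pow_sq, pow_mul, ← Finset.prod_pow_eq_pow_sum,
    ← Finset.prod_mul_distrib]
  simp only [Pi.smul_apply, norm_smul, mul_pow, pow_mul, norm_eq_abs, sq_abs]

theorem sum_norm_smul_sq (c : ℝ) (w : ι → ℂ) : ∑ i, ‖(c • w) i‖ ^ 2 = c ^ 2 * ∑ i, ‖w i‖ ^ 2 := by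
  simp only [Pi.smul_apply, norm_smul, mul_pow, norm_eq_abs, sq_abs, Finset.mul_sum]

theorem monomial_mul_exp_neg_eq_prod (w : ι → ℂ) :
    ‖∏ i, w i ^ α i‖ ^ 2 * rexp (-∑ i, ‖w i‖ ^ 2)
      = ∏ i, ‖w i‖ ^ (2 * α i) * rexp (-‖w i‖ ^ 2) := by
  rw [norm_prod_pow_sq, Finset.prod_mul_distrib, ← exp_sum, Finset.sum_neg_distrib]

theorem integral_monomial_mul_exp_neg :
    ∫ w : ι → ℂ, ‖∏ i, w i ^ α i‖ ^ 2 * rexp (-∑ i, ‖w i‖ ^ 2)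
      = π ^ Fintype.card ι * ∏ i, Real.Gamma (α i + 1) := by
  simp only [monomial_mul_exp_neg_eq_prod]
  rw [volume_pi, integral_fintype_prod_eq_prod (fun i (z : ℂ) => ‖z‖ ^ (2 * α i) * rexp (-‖z‖ ^ 2))]
  simp only [Complex.integral_norm_pow_mul_exp_neg_sq, Finset.prod_mul_distrib, Finset.prod_const,
    Finset.card_univ]

-- A nonzero Bochner integral certifies integrability.
theorem integrable_monomial_mul_exp_neg :
    Integrable fun w : ι → ℂ => ‖∏ i, w i ^ α i‖ ^ 2 * rexp (-∑ i, ‖w i‖ ^ 2) := by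
  simp only [monomial_mul_exp_neg_eq_prod]
  rw [volume_pi]
  refine Integrable.fintype_prod (f := fun i (z : ℂ) => ‖z‖ ^ (2 * α i) * rexp (-‖z‖ ^ 2))
    fun i => Integrable.of_integral_ne_zero ?_
  rw [Complex.integral_norm_pow_mul_exp_neg_sq]
  exact mul_ne_zero pi_ne_zero (Gamma_pos_of_pos (by positivity)).ne'

theorem integrableOn_monomial_sublevel (s : ℝ) :
    IntegrableOn (fun w : ι → ℂ => ‖∏ i, w i ^ α i‖ ^ 2) {w | ∑ i, ‖w i‖ ^ 2 < s} := by
  have hsub : {w : ι → ℂ | ∑ i, ‖w i‖ ^ 2 < s} ⊆ Metric.closedBall 0 (√s) := fun w hw => by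
    rw [mem_closedBall_zero_iff, pi_norm_le_iff_of_nonneg (sqrt_nonneg s)]
    exact fun i => le_sqrt_of_sq_le <| (Finset.single_le_sum (f := fun j => ‖w j‖ ^ 2)
      (fun j _ => by positivity) (Finset.mem_univ i)).trans hw.le
  have hF : Continuous fun w : ι → ℂ => ‖∏ i, w i ^ α i‖ ^ 2 := by fun_prop
  exact (hF.continuousOn.integrableOn_compact (isCompact_closedBall _ _)).mono_set hsub

theorem setIntegral_monomial_sublevel_eq_pow_mul {T : ℝ} (hT : 0 < T) :
    ∫ w in {w : ι → ℂ | ∑ i, ‖w i‖ ^ 2 < T}, ‖∏ i, w i ^ α i‖ ^ 2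
      = T ^ (∑ i, α i + Fintype.card ι) *
        ∫ w in {w : ι → ℂ | ∑ i, ‖w i‖ ^ 2 < 1}, ‖∏ i, w i ^ α i‖ ^ 2 := by
  have h := setIntegral_setOf_lt_of_homogeneous volume
    (f := fun w : ι → ℂ => ‖∏ i, w i ^ α i‖ ^ 2) (g := fun w : ι → ℂ => ∑ i, ‖w i‖ ^ 2)
    (fun c _ => norm_prod_smul_pow_sq α c) (fun c _ => sum_norm_smul_sq c) (sqrt_pos.2 hT) 1
  rw [sq_sqrt hT.le, mul_one] at h
  have hdim : finrank ℝ (ι → ℂ) = 2 * Fintype.card ι := by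
    rw [finrank_pi_fintype]; simp [mul_comm]
  rw [h, hdim, ← mul_add, pow_mul, sq_sqrt hT.le]

theorem setIntegral_monomial_sublevel_one :
    ∫ w in {w : ι → ℂ | ∑ i, ‖w i‖ ^ 2 < 1}, ‖∏ i, w i ^ α i‖ ^ 2
      = π ^ Fintype.card ι * (∏ i, Real.Gamma (α i + 1)) /
        Real.Gamma ((∑ i, α i + Fintype.card ι : ℕ) + 1) := by
  set F := fun w : ι → ℂ => ‖∏ i, w i ^ α i‖ ^ 2
  set q := fun w : ι → ℂ => ∑ i, ‖w i‖ ^ 2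
  have hF : Continuous F := by fun_prop
  have hq : Continuous q := by fun_prop
  set μ := volume.withDensity fun w => ENNReal.ofReal (F w)
  have hμ (s : ℝ) : μ {w | q w < s} = ENNReal.ofReal (∫ w in {w | q w < s}, F w) := by
    rw [withDensity_apply _ (measurableSet_lt hq.measurable measurable_const),
      ofReal_integral_eq_lintegral_ofReal (integrableOn_monomial_sublevel α s)
        (ae_of_all _ fun w => by positivity)]
  have hgauss : ∫⁻ w, ENNReal.ofReal (rexp (-q w)) ∂μ
      = ENNReal.ofReal (π ^ Fintype.card ι * ∏ i, Real.Gamma (α i + 1)) := by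
    rw [lintegral_withDensity_eq_lintegral_mul _ hF.measurable.ennreal_ofReal (by fun_prop),
      ← integral_monomial_mul_exp_neg, ofReal_integral_eq_lintegral_ofReal
        (integrable_monomial_mul_exp_neg α) (ae_of_all _ fun w => by positivity)]
    congr with w
    rw [Pi.mul_apply, ENNReal.ofReal_mul (by positivity)]
  have h := lintegral_exp_neg_eq_Gamma_mul_measure_lt_one μ hq.measurable
    (fun w => by positivity) (N := (∑ i, α i + Fintype.card ι : ℕ))
    (neg_one_lt_zero.trans_le (Nat.cast_nonneg _))
    fun s hs => by
      rw [hμ, hμ, setIntegral_monomial_sublevel_eq_pow_mul α hs,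
        ENNReal.ofReal_mul (by positivity), rpow_natCast]
  have hΓ : 0 < Real.Gamma ((∑ i, α i + Fintype.card ι : ℕ) + 1) :=
    Gamma_pos_of_pos (by positivity)
  have hV : 0 ≤ ∫ w in {w | q w < 1}, F w :=
    setIntegral_nonneg (measurableSet_lt hq.measurable measurable_const) fun w _ => by positivity
  rw [hgauss, hμ, ← ENNReal.ofReal_mul hΓ.le,
    ENNReal.ofReal_eq_ofReal_iff (by positivity) (mul_nonneg hΓ.le hV)] at h
  rw [h, mul_div_cancel_left₀ _ hΓ.ne']

end Monomial

theorem WithLp.setIntegral_volume {X E : Type*} [MeasureSpace X] [NormedAddCommGroup E]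
    [NormedSpace ℝ E] (q : ENNReal) (F : WithLp q X → E) (S : Set (WithLp q X)) :
    ∫ w in S, F w = ∫ x in WithLp.toLp q ⁻¹' S, F (WithLp.toLp q x) := by
  rw [← MeasurableEquiv.coe_toLp]
  exact (MeasurableEquiv.toLp q X).measurableEmbedding.setIntegral_map _ _

theorem EuclideanSpace.norm_rpow_two_mul_lt_iff {ι : Type*} [Fintype ι] {p t : ℝ} (hp : 0 < p)
    (ht : 0 ≤ t) (w : EuclideanSpace ℂ ι) :
    ‖w‖ ^ (2 * p) < t ↔ ∑ i, ‖w i‖ ^ 2 < t ^ p⁻¹ := by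
  rw [rpow_mul (norm_nonneg w), rpow_two, EuclideanSpace.norm_sq_eq,
    lt_rpow_inv_iff_of_pos (by positivity) ht hp]

/-- The single-block monomial integral: for `p > 0`, `α ∈ ℕⁿ`, `t > 0`,
`∫_{‖w‖^{2p} < t} |w^α|² dV(w)
  = πⁿ (∏ Γ(αᵢ+1)) Γ((|α|+n)/p) / (p Γ(|α|+n) Γ((|α|+n)/p + 1)) · t^{(|α|+n)/p}`. -/
theorem integral_monomial_sublevel (n : ℕ) (hn : 0 < n) (p t : ℝ) (hp : 0 < p)
    (ht : 0 < t) (α : Fin n → ℕ) :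
    ∫ w in {w : EuclideanSpace ℂ (Fin n) | ‖w‖ ^ (2 * p) < t},
        ‖∏ i, w i ^ α i‖ ^ 2 =
      π ^ n * (∏ i, Real.Gamma ((α i : ℝ) + 1)) *
          Real.Gamma (((∑ i, (α i : ℝ)) + n) / p) /
        (p * Real.Gamma ((∑ i, (α i : ℝ)) + n) *
          Real.Gamma (((∑ i, (α i : ℝ)) + n) / p + 1)) *
        t ^ (((∑ i, (α i : ℝ)) + n) / p) := by
  have hset : WithLp.toLp 2 ⁻¹' {w : EuclideanSpace ℂ (Fin n) | ‖w‖ ^ (2 * p) < t}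
      = {w : Fin n → ℂ | ∑ i, ‖w i‖ ^ 2 < t ^ p⁻¹} :=
    ext fun w => EuclideanSpace.norm_rpow_two_mul_lt_iff hp ht.le _
  set M : ℝ := (∑ i, (α i : ℝ)) + n
  have hM : 0 < M := by positivity
  have hcast : ((∑ i, α i + Fintype.card (Fin n) : ℕ) : ℝ) = M := by push_cast; simp [M]
  rw [WithLp.setIntegral_volume, hset, setIntegral_monomial_sublevel_eq_pow_mul α (by positivity),
    setIntegral_monomial_sublevel_one, ← rpow_natCast, ← rpow_mul ht.le, hcast, Fintype.card_fin,
    Gamma_add_one hM.ne', Gamma_add_one (div_pos hM hp).ne', inv_mul_eq_div]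
  have hΓM := Gamma_pos_of_pos hM
  have hΓMp := Gamma_pos_of_pos (div_pos hM hp)
  field_simp
end

section
/- Let D = {(z,w) ∈ ℂ^{n₀}×ℂ^{n₁}×⋯×ℂ^{n_l} : Σⱼ ‖w_{(j)}‖^{2pⱼ} < e^{-μ‖z‖²}} be a generalized Fock-Bargmann-Hartogs domain. For each point (z₀, w₀) of the boundary stratum b₀D (where Σⱼ ‖w_{(j)0}‖^{2pⱼ} = e^{-μ‖z₀‖²} and w_{(j)0} ≠ 0 for all j with pⱼ ≠ 1), the Levi form of the defining function ρ(z,w) = Σⱼ ‖w_{(j)}‖^{2pⱼ} - e^{-μ‖z‖²} is positive definite on the complex tangent space at (z₀,w₀); hence D is strongly pseudoconvex at every point of b₀D. -/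
/-!
On the complex tangent space, the one negative term `μ² e^{-μ‖z₀‖²} |⟨z₀, ζ⟩|²` of the Levi form
is controlled through the tangency condition: it equals
`e^{-μ‖z₀‖²}⁻¹ |Σₖ pₖ ‖w_{(k)0}‖^{2(pₖ-1)} ⟨w_{(k)0}, η_{(k)}⟩|²`, and Cauchy–Schwarz with weights
`‖w_{(k)0}‖^{2pₖ}` (which sum to `e^{-μ‖z₀‖²}` on the boundary) bounds it by
`Σₖ pₖ² ‖w_{(k)0}‖^{2(pₖ-2)} |⟨w_{(k)0}, η_{(k)}⟩|²`. Each summand of this bound is in turn at most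
the `k`-th block of the Levi form, by Cauchy–Schwarz in `ℂ^{nₖ}`. What remains is
`μ e^{-μ‖z₀‖²} ‖ζ‖²`, positive unless `ζ = 0`, in which case some `η_{(j)} ≠ 0` makes its block
positive.
-/

open MeasureTheory Real ComplexInnerProductSpace

/-- The Levi form of the defining function
`ρ(z,w) = Σₖ ‖w_{(k)}‖^{2pₖ} - e^{-μ‖z‖²}` at a point `(z₀,w₀)`, evaluated on a
tangent vector `T = (ζ, η)`. -/
noncomputable def leviForm (n₀ l : ℕ) (n : Fin l → ℕ) (p : Fin l → ℝ) (μ : ℝ)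
    (z₀ : EuclideanSpace ℂ (Fin n₀)) (w₀ : (i : Fin l) → EuclideanSpace ℂ (Fin (n i)))
    (ζ : EuclideanSpace ℂ (Fin n₀)) (η : (i : Fin l) → EuclideanSpace ℂ (Fin (n i))) : ℝ :=
  (∑ k, p k * (p k - 1) * ‖w₀ k‖ ^ (2 * (p k - 2)) * ‖⟪w₀ k, η k⟫‖ ^ 2)
    + (∑ k, p k * ‖w₀ k‖ ^ (2 * (p k - 1)) * ‖η k‖ ^ 2)
    + μ * Real.exp (-μ * ‖z₀‖ ^ 2) * ‖ζ‖ ^ 2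
    - μ ^ 2 * Real.exp (-μ * ‖z₀‖ ^ 2) * ‖⟪z₀, ζ⟫‖ ^ 2

section Block

variable {𝕜 E : Type*} [RCLike 𝕜] [NormedAddCommGroup E] [InnerProductSpace 𝕜 E]

theorem rpow_mul_norm_inner_sq_le (p : ℝ) (w η : E) :
    ‖w‖ ^ (2 * (p - 2)) * ‖inner 𝕜 w η‖ ^ 2 ≤ ‖w‖ ^ (2 * (p - 1)) * ‖η‖ ^ 2 := by
  rcases eq_or_ne w 0 with rfl | hw
  · simp only [inner_zero_left, norm_zero, ne_eq, OfNat.ofNat_ne_zero, not_false_eq_true,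
      zero_pow, mul_zero]
    positivity
  have hr : 0 < ‖w‖ := norm_pos_iff.mpr hw
  have hcs : ‖inner 𝕜 w η‖ ^ 2 ≤ ‖w‖ ^ 2 * ‖η‖ ^ 2 := by
    rw [← mul_pow]
    exact pow_le_pow_left₀ (norm_nonneg _) (norm_inner_le_norm w η) 2
  calc ‖w‖ ^ (2 * (p - 2)) * ‖inner 𝕜 w η‖ ^ 2
      ≤ ‖w‖ ^ (2 * (p - 2)) * (‖w‖ ^ 2 * ‖η‖ ^ 2) := by gcongr
    _ = ‖w‖ ^ (2 * (p - 2) + 2) * ‖η‖ ^ 2 := by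
      rw [rpow_add hr, ← rpow_natCast, Nat.cast_ofNat]; ring
    _ = ‖w‖ ^ (2 * (p - 1)) * ‖η‖ ^ 2 := by ring_nf

theorem sq_mul_rpow_mul_norm_inner_sq_le {p : ℝ} (hp : 0 ≤ p) (w η : E) :
    p ^ 2 * ‖w‖ ^ (2 * (p - 2)) * ‖inner 𝕜 w η‖ ^ 2 ≤
      p * (p - 1) * ‖w‖ ^ (2 * (p - 2)) * ‖inner 𝕜 w η‖ ^ 2
        + p * ‖w‖ ^ (2 * (p - 1)) * ‖η‖ ^ 2 := by
  nlinarith [mul_le_mul_of_nonneg_left (rpow_mul_norm_inner_sq_le (𝕜 := 𝕜) p w η) hp]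

theorem levi_block_pos {p : ℝ} (hp : 0 < p) {w η : E} (hw : w = 0 → p = 1) (hη : η ≠ 0) :
    0 < p * (p - 1) * ‖w‖ ^ (2 * (p - 2)) * ‖inner 𝕜 w η‖ ^ 2
      + p * ‖w‖ ^ (2 * (p - 1)) * ‖η‖ ^ 2 := by
  have hb : 0 < ‖w‖ ^ (2 * (p - 1)) * ‖η‖ ^ 2 := by
    refine mul_pos ?_ (pow_pos (norm_pos_iff.mpr hη) 2)
    rcases eq_or_ne w 0 with rfl | hw0
    · simp [hw rfl]
    · exact rpow_pos_of_pos (norm_pos_iff.mpr hw0) _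
  have ha : 0 ≤ ‖w‖ ^ (2 * (p - 2)) * ‖inner 𝕜 w η‖ ^ 2 := by positivity
  nlinarith [rpow_mul_norm_inner_sq_le (𝕜 := 𝕜) p w η, mul_pos hp hb, mul_nonneg hp.le ha,
    mul_nonneg (mul_nonneg hp.le hp.le) ha]

theorem norm_rpow_smul_inner_sq_le (p : ℝ) (w η : E) :
    ‖((p * ‖w‖ ^ (2 * (p - 1)) : ℝ) : 𝕜) * inner 𝕜 w η‖ ^ 2 ≤
      ‖w‖ ^ (2 * p) * (p ^ 2 * ‖w‖ ^ (2 * (p - 2)) * ‖inner 𝕜 w η‖ ^ 2) := by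
  rcases eq_or_ne w 0 with rfl | hw
  · simp only [inner_zero_left, mul_zero, norm_zero, ne_eq, OfNat.ofNat_ne_zero,
      not_false_eq_true, zero_pow]
    positivity
  have hr : 0 < ‖w‖ := norm_pos_iff.mpr hw
  refine le_of_eq ?_
  rw [norm_mul, RCLike.norm_ofReal, mul_pow, sq_abs, mul_pow,
    show 2 * (p - 1) = p + (p - 2) by ring, show 2 * p = p + p by ring,
    show 2 * (p - 2) = (p - 2) + (p - 2) by ring, rpow_add hr, rpow_add hr, rpow_add hr]
  ring

end Block

theorem norm_sum_rpow_smul_inner_sq_le {𝕜 ι : Type*} [RCLike 𝕜] [Fintype ι] {E : ι → Type*}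
    [∀ k, NormedAddCommGroup (E k)] [∀ k, InnerProductSpace 𝕜 (E k)]
    (p : ι → ℝ) (w η : ∀ k, E k) :
    ‖∑ k, ((p k * ‖w k‖ ^ (2 * (p k - 1)) : ℝ) : 𝕜) * inner 𝕜 (w k) (η k)‖ ^ 2 ≤
      (∑ k, ‖w k‖ ^ (2 * p k)) *
        ∑ k, p k ^ 2 * ‖w k‖ ^ (2 * (p k - 2)) * ‖inner 𝕜 (w k) (η k)‖ ^ 2 :=
  calc _ ≤ (∑ k, ‖((p k * ‖w k‖ ^ (2 * (p k - 1)) : ℝ) : 𝕜) * inner 𝕜 (w k) (η k)‖) ^ 2 :=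
        pow_le_pow_left₀ (norm_nonneg _) (norm_sum_le _ _) 2
    _ ≤ _ := Finset.sum_sq_le_sum_mul_sum_of_sq_le_mul _ (fun _ _ => by positivity)
        (fun _ _ => by positivity) (fun k _ => norm_rpow_smul_inner_sq_le (p k) (w k) (η k))

theorem leviForm_posDef_on_b₀_general
    (n₀ l : ℕ) (n : Fin l → ℕ) (p : Fin l → ℝ) (hp : ∀ i, 0 < p i)
    (μ : ℝ) (hμ : 0 < μ)
    (z₀ : EuclideanSpace ℂ (Fin n₀)) (w₀ : (i : Fin l) → EuclideanSpace ℂ (Fin (n i)))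
    (hbd : ∑ k, ‖w₀ k‖ ^ (2 * p k) = Real.exp (-μ * ‖z₀‖ ^ 2))
    (hw₀ : ∀ j, p j ≠ 1 → w₀ j ≠ 0)
    (ζ : EuclideanSpace ℂ (Fin n₀)) (η : (i : Fin l) → EuclideanSpace ℂ (Fin (n i)))
    (htan : ∑ k, ((p k * ‖w₀ k‖ ^ (2 * (p k - 1)) : ℝ) : ℂ) * ⟪w₀ k, η k⟫
      + ((μ * Real.exp (-μ * ‖z₀‖ ^ 2) : ℝ) : ℂ) * ⟪z₀, ζ⟫ = 0)
    (hT : ¬(ζ = 0 ∧ η = 0)) :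
    0 < leviForm n₀ l n p μ z₀ w₀ ζ η := by
  set e := Real.exp (-μ * ‖z₀‖ ^ 2)
  unfold leviForm
  by_cases hζ : ζ = 0
  · obtain ⟨j, hj⟩ : ∃ j, η j ≠ 0 := Function.ne_iff.mp fun hη => hT ⟨hζ, hη⟩
    have hblock_j := levi_block_pos (𝕜 := ℂ) (hp j) (fun hw => of_not_not fun h => hw₀ j h hw) hj
    have hblocks := Finset.sum_pos' (fun k _ => (sq_mul_rpow_mul_norm_inner_sq_le (𝕜 := ℂ)
      (hp k).le (w₀ k) (η k)).trans' (by positivity)) ⟨j, Finset.mem_univ j, hblock_j⟩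
    rw [Finset.sum_add_distrib] at hblocks
    simpa [hζ] using hblocks
  have he : 0 < e := exp_pos _
  have hnormal : μ ^ 2 * e * ‖⟪z₀, ζ⟫‖ ^ 2 ≤
      ∑ k, p k ^ 2 * ‖w₀ k‖ ^ (2 * (p k - 2)) * ‖⟪w₀ k, η k⟫‖ ^ 2 := by
    have h : ‖∑ k, ((p k * ‖w₀ k‖ ^ (2 * (p k - 1)) : ℝ) : ℂ) * ⟪w₀ k, η k⟫‖ ^ 2 ≤
        (∑ k, ‖w₀ k‖ ^ (2 * p k)) *
          ∑ k, p k ^ 2 * ‖w₀ k‖ ^ (2 * (p k - 2)) * ‖⟪w₀ k, η k⟫‖ ^ 2 :=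
      norm_sum_rpow_smul_inner_sq_le p w₀ η
    rw [eq_neg_of_add_eq_zero_left htan, norm_neg, norm_mul, Complex.norm_real,
      Real.norm_of_nonneg (by positivity), hbd] at h
    nlinarith
  have hblocks := Finset.sum_le_sum fun k (_ : k ∈ Finset.univ) =>
    sq_mul_rpow_mul_norm_inner_sq_le (𝕜 := ℂ) (hp k).le (w₀ k) (η k)
  rw [Finset.sum_add_distrib] at hblocks
  have : 0 < μ * e * ‖ζ‖ ^ 2 := by positivity
  linarith

/-- Proposition 3.1(1) of Bi–Tu: at every point of the boundary stratum `b₀D`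
(where `Σₖ ‖w_{(k)0}‖^{2pₖ} = e^{-μ‖z₀‖²}` and `w_{(j)0} ≠ 0` for every block `j`
with `pⱼ ≠ 1`), the Levi form of `ρ` is positive definite on the complex tangent
space; hence `D` is strongly pseudoconvex along `b₀D`. -/
theorem leviForm_posDef_on_b₀
    (n₀ l : ℕ) (n : Fin l → ℕ) (hn : ∀ i, 0 < n i) (p : Fin l → ℝ) (hp : ∀ i, 0 < p i)
    (hp1 : ∀ i : Fin l, i.val ≠ 0 → p i ≠ 1) (μ : ℝ) (hμ : 0 < μ)
    (z₀ : EuclideanSpace ℂ (Fin n₀)) (w₀ : (i : Fin l) → EuclideanSpace ℂ (Fin (n i)))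
    (hbd : ∑ k, ‖w₀ k‖ ^ (2 * p k) = Real.exp (-μ * ‖z₀‖ ^ 2))
    (hw₀ : ∀ j, p j ≠ 1 → w₀ j ≠ 0)
    (ζ : EuclideanSpace ℂ (Fin n₀)) (η : (i : Fin l) → EuclideanSpace ℂ (Fin (n i)))
    (htan : ∑ k, ((p k * ‖w₀ k‖ ^ (2 * (p k - 1)) : ℝ) : ℂ) * ⟪w₀ k, η k⟫
      + ((μ * Real.exp (-μ * ‖z₀‖ ^ 2) : ℝ) : ℂ) * ⟪z₀, ζ⟫ = 0)
    (hT : ¬(ζ = 0 ∧ η = 0)) :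
    0 < leviForm n₀ l n p μ z₀ w₀ ζ η :=
  leviForm_posDef_on_b₀_general n₀ l n p hp μ hμ z₀ w₀ hbd hw₀ ζ η htan hT
end

section
/- Let D = D_{n₀}^{n,p}(μ) be a generalized Fock-Bargmann-Hartogs domain and let a ∈ ℂ^{n₀}. Then the map φ_a(z, w_{(1)},…,w_{(l)}) = (z+a, w_{(1)}·(e^{-2μ⟨z,a⟩ - μ‖a‖²})^{1/(2p₁)}, …, w_{(l)}·(e^{-2μ⟨z,a⟩ - μ‖a‖²})^{1/(2p_l)}) is a holomorphic automorphism of D, where ⟨z,a⟩ = Σᵢ zᵢāᵢ. -/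
open MeasureTheory Real ComplexInnerProductSpace

/-- For any `a ∈ ℂ^{n₀}`, the map
`φ_a(z, w) = (z+a, w_{(1)} e^{(-2μ⟨z,a⟩-μ‖a‖²)/(2p₁)}, …, w_{(l)} e^{(-2μ⟨z,a⟩-μ‖a‖²)/(2p_l)})`
is a holomorphic automorphism of the generalized Fock-Bargmann-Hartogs domain
`D = D_{n₀}^{n,p}(μ)`.  Here `⟨z,a⟩ = Σᵢ zᵢ āᵢ = ⟪a, z⟫` in Mathlib's convention. -/
theorem translation_is_automorphism
    (n₀ l : ℕ) (n : Fin l → ℕ) (hn : ∀ i, 0 < n i) (p : Fin l → ℝ) (hp : ∀ i, 0 < p i)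
    (μ : ℝ) (hμ : 0 < μ)
    (D : Set (EuclideanSpace ℂ (Fin n₀) × ((i : Fin l) → EuclideanSpace ℂ (Fin (n i)))))
    (hD : D = {x | ∑ j, ‖x.2 j‖ ^ (2 * p j) < Real.exp (-μ * ‖x.1‖ ^ 2)})
    (a : EuclideanSpace ℂ (Fin n₀))
    (φ : EuclideanSpace ℂ (Fin n₀) × ((i : Fin l) → EuclideanSpace ℂ (Fin (n i))) →
      EuclideanSpace ℂ (Fin n₀) × ((i : Fin l) → EuclideanSpace ℂ (Fin (n i))))
    (hφ : ∀ x, φ x = (x.1 + a, fun j =>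
      Complex.exp ((-2 * (μ : ℂ) * ⟪a, x.1⟫ - (μ : ℂ) * ((‖a‖ ^ 2 : ℝ) : ℂ)) /
        (2 * (p j : ℂ))) • x.2 j)) :
    Differentiable ℂ φ ∧ Set.BijOn φ D D := by
  classical
  set E : EuclideanSpace ℂ (Fin n₀) → EuclideanSpace ℂ (Fin n₀) → ℂ :=
    fun b z => -2 * (μ : ℂ) * ⟪b, z⟫ - (μ : ℂ) * ((‖b‖ ^ 2 : ℝ) : ℂ) with hE
  have hp2 : ∀ j, (0 : ℝ) < 2 * p j := fun j => by have := hp j; positivity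
  -- real part of the exponent
  have hre : ∀ b z, (E b z).re = -2 * μ * (⟪b, z⟫ : ℂ).re - μ * ‖b‖ ^ 2 := by
    intro b z
    have h : E b z = ((-2 * μ : ℝ) : ℂ) * ⟪b, z⟫ - ((μ * ‖b‖ ^ 2 : ℝ) : ℂ) := by
      simp only [hE]; push_cast; ring
    rw [h, Complex.sub_re, Complex.re_ofReal_mul, Complex.ofReal_re]
  -- norm computation for each component
  have hnorm : ∀ b z (j : Fin l) (w : EuclideanSpace ℂ (Fin (n j))),
      ‖Complex.exp (E b z / (2 * (p j : ℂ))) • w‖ ^ (2 * p j)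
        = Real.exp ((E b z).re) * ‖w‖ ^ (2 * p j) := by
    intro b z j w
    rw [norm_smul, Real.mul_rpow (norm_nonneg _) (norm_nonneg _)]
    congr 1
    rw [Complex.norm_exp]
    have h2 : (2 * (p j : ℂ)) = ((2 * p j : ℝ) : ℂ) := by push_cast; ring
    rw [h2, Complex.div_ofReal_re, ← Real.exp_mul,
      div_mul_cancel₀ _ (ne_of_gt (hp2 j))]
  -- membership is preserved (and reflected) by each translation-type map
  have hmem : ∀ (b : EuclideanSpace ℂ (Fin n₀))
      (x : EuclideanSpace ℂ (Fin n₀) × ((i : Fin l) → EuclideanSpace ℂ (Fin (n i)))),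
      (((x.1 + b, fun j => Complex.exp (E b x.1 / (2 * (p j : ℂ))) • x.2 j) :
        EuclideanSpace ℂ (Fin n₀) × ((i : Fin l) → EuclideanSpace ℂ (Fin (n i)))) ∈ D ↔ x ∈ D) := by
    intro b x
    rw [hD]
    simp only [Set.mem_setOf_eq]
    have hsum : (∑ j, ‖Complex.exp (E b x.1 / (2 * (p j : ℂ))) • x.2 j‖ ^ (2 * p j))
        = Real.exp ((E b x.1).re) * ∑ j, ‖x.2 j‖ ^ (2 * p j) := by
      rw [Finset.mul_sum]
      exact Finset.sum_congr rfl fun j _ => hnorm b x.1 j (x.2 j)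
    have hrhs : Real.exp (-μ * ‖x.1 + b‖ ^ 2)
        = Real.exp ((E b x.1).re) * Real.exp (-μ * ‖x.1‖ ^ 2) := by
      rw [← Real.exp_add]
      congr 1
      rw [hre]
      have hns : ‖x.1 + b‖ ^ 2 = ‖x.1‖ ^ 2 + 2 * (⟪x.1, b⟫ : ℂ).re + ‖b‖ ^ 2 := by
        have := norm_add_sq (𝕜 := ℂ) x.1 b
        simpa using this
      have hsym : (⟪x.1, b⟫ : ℂ).re = (⟪b, x.1⟫ : ℂ).re := by
        have := inner_re_symm (𝕜 := ℂ) x.1 b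
        simpa using this
      rw [hns, hsym]
      ring
    rw [hsum, hrhs]
    exact mul_lt_mul_iff_right₀ (Real.exp_pos _)
  -- the inverse map
  set ψ : EuclideanSpace ℂ (Fin n₀) × ((i : Fin l) → EuclideanSpace ℂ (Fin (n i))) →
      EuclideanSpace ℂ (Fin n₀) × ((i : Fin l) → EuclideanSpace ℂ (Fin (n i))) :=
    fun x => (x.1 + (-a), fun j => Complex.exp (E (-a) x.1 / (2 * (p j : ℂ))) • x.2 j) with hψ
  -- cancellation identity
  have hcancel : ∀ (b z : EuclideanSpace ℂ (Fin n₀)), E (-b) (z + b) + E b z = 0 := by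
    intro b z
    have h1 : (⟪(-b : EuclideanSpace ℂ (Fin n₀)), z + b⟫ : ℂ) = -⟪b, z⟫ - ⟪b, b⟫ := by
      rw [inner_neg_left, inner_add_right]; ring
    have h2 : (⟪(b : EuclideanSpace ℂ (Fin n₀)), b⟫ : ℂ) = ((‖b‖ ^ 2 : ℝ) : ℂ) := by
      have := inner_self_eq_norm_sq_to_K (𝕜 := ℂ) b
      rw [this]; norm_cast
    simp only [hE, h1, h2, norm_neg]
    ring
  have hsmul_cancel : ∀ (b z : EuclideanSpace ℂ (Fin n₀)) (j : Fin l)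
      (w : EuclideanSpace ℂ (Fin (n j))),
      Complex.exp (E (-b) (z + b) / (2 * (p j : ℂ))) •
        Complex.exp (E b z / (2 * (p j : ℂ))) • w = w := by
    intro b z j w
    rw [smul_smul, ← Complex.exp_add, ← add_div, hcancel, zero_div,
      Complex.exp_zero, one_smul]
  have hψφ : ∀ x, ψ (φ x) = x := by
    intro x
    rw [hφ, hψ]
    refine Prod.ext ?_ ?_
    · show x.1 + a + (-a) = x.1
      abel
    · funext j
      exact hsmul_cancel a x.1 j (x.2 j)
  have hφψ : ∀ x, φ (ψ x) = x := by
    intro x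
    rw [hψ, hφ]
    refine Prod.ext ?_ ?_
    · show x.1 + (-a) + a = x.1
      abel
    · funext j
      have := hsmul_cancel (-a) x.1 j (x.2 j)
      rw [neg_neg] at this
      exact this
  constructor
  · -- differentiability
    have hφ' : φ = fun x => (x.1 + a,
        fun j => Complex.exp (E a x.1 / (2 * (p j : ℂ))) • x.2 j) := funext hφ
    rw [hφ']
    refine Differentiable.prodMk ?_ ?_
    · exact differentiable_fst.add_const a
    · refine differentiable_pi.mpr fun j => ?_
      refine Differentiable.fun_smul ?_ ?_
      · refine Differentiable.cexp ?_
        have h1 : Differentiable ℂ (fun x : EuclideanSpace ℂ (Fin n₀) ×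
            ((i : Fin l) → EuclideanSpace ℂ (Fin (n i))) => (⟪a, x.1⟫ : ℂ)) :=
          (innerSL ℂ a).differentiable.comp differentiable_fst
        have h2 : Differentiable ℂ (fun x : EuclideanSpace ℂ (Fin n₀) ×
            ((i : Fin l) → EuclideanSpace ℂ (Fin (n i))) => E a x.1) := by
          simp only [hE]
          exact (h1.const_mul _).sub (differentiable_const _)
        simp only [div_eq_mul_inv]
        exact h2.mul_const _
      · exact (ContinuousLinearMap.proj j (R := ℂ)
          (φ := fun i => EuclideanSpace ℂ (Fin (n i)))).differentiable.comp differentiable_snd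
  · refine ⟨?_, ?_, ?_⟩
    · intro x hx
      rw [hφ x]
      exact (hmem a x).mpr hx
    · exact (Function.LeftInverse.injective hψφ).injOn
    · intro x hx
      refine ⟨ψ x, ?_, hφψ x⟩
      rw [hψ]
      exact (hmem (-a) x).mpr hx
end

section
/- Let n₁ = 1, p₁ ≠ 1, and let F(z, w_{(1)}, w_{(2)}, …, w_{(l)}) = (z, w_{(1)}², w_{(2)}, …, w_{(l)}) with w_{(1)} ∈ ℂ. Then F is a proper holomorphic mapping from D_{n₀}^{n,p}(μ) onto D_{n₀}^{n,q}(μ) where q = (p₁/2, p₂, …, p_l), and F is not injective (hence not a biholomorphism). -/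
open MeasureTheory Real

/-- Remark 1.8 of Bi–Tu: if the first fiber block is one-dimensional (`n₁ = 1`,
`w_{(1)} ∈ ℂ`) with exponent `p₁ ≠ 1`, the map
`F(z, w_{(1)}, w_{(2)}, …, w_{(l)}) = (z, w_{(1)}², w_{(2)}, …, w_{(l)})` is a proper
holomorphic map from `D_{n₀}^{n,p}(μ)` onto `D_{n₀}^{n,q}(μ)` with
`q = (p₁/2, p₂, …, p_l)`, and it is not injective (hence not a biholomorphism). -/
theorem square_map_proper_not_injective
    (n₀ r : ℕ) (m : Fin r → ℕ) (hm : ∀ i, 0 < m i)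
    (p₁ : ℝ) (hp₁ : 0 < p₁) (hp₁1 : p₁ ≠ 1) (p' : Fin r → ℝ) (hp' : ∀ i, 0 < p' i)
    (μ : ℝ) (hμ : 0 < μ)
    (Dp Dq : Set (EuclideanSpace ℂ (Fin n₀) × ℂ × ((i : Fin r) → EuclideanSpace ℂ (Fin (m i)))))
    (hDp : Dp = {x | ‖x.2.1‖ ^ (2 * p₁) + ∑ j, ‖x.2.2 j‖ ^ (2 * p' j) <
      Real.exp (-μ * ‖x.1‖ ^ 2)})
    (hDq : Dq = {x | ‖x.2.1‖ ^ (2 * (p₁ / 2)) + ∑ j, ‖x.2.2 j‖ ^ (2 * p' j) <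
      Real.exp (-μ * ‖x.1‖ ^ 2)})
    (F : EuclideanSpace ℂ (Fin n₀) × ℂ × ((i : Fin r) → EuclideanSpace ℂ (Fin (m i))) →
      EuclideanSpace ℂ (Fin n₀) × ℂ × ((i : Fin r) → EuclideanSpace ℂ (Fin (m i))))
    (hF : ∀ x, F x = (x.1, x.2.1 ^ 2, x.2.2)) :
    Differentiable ℂ F ∧ Set.MapsTo F Dp Dq ∧ Set.SurjOn F Dp Dq ∧
      (∀ K, K ⊆ Dq → IsCompact K → IsCompact (Dp ∩ F ⁻¹' K)) ∧
      ¬ Set.InjOn F Dp := by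
  have hFeq : F = fun x => (x.1, x.2.1 ^ 2, x.2.2) := funext hF
  have key : ∀ w : ℂ, ‖w ^ 2‖ ^ (2 * (p₁ / 2)) = ‖w‖ ^ (2 * p₁) := by
    intro w
    rw [norm_pow, ← Real.rpow_natCast ‖w‖ 2,
      ← Real.rpow_mul (norm_nonneg w)]
    congr 1
    ring
  have mem_iff : ∀ x, x ∈ Dp ↔ F x ∈ Dq := by
    intro x
    rw [hDp, hDq, hF]
    simp only [Set.mem_setOf_eq, key]
  refine ⟨?_, ?_, ?_, ?_, ?_⟩
  · rw [hFeq]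
    fun_prop
  · intro x hx
    exact (mem_iff x).1 hx
  · intro y hy
    set w : ℂ := if y.2.1 = 0 then 0 else y.2.1 ^ ((1 : ℂ) / 2) with hw
    have hw2 : w ^ 2 = y.2.1 := by
      by_cases h : y.2.1 = 0
      · simp [hw, h]
      · rw [hw, if_neg h, sq, ← Complex.cpow_add _ _ h]
        norm_num
    refine ⟨(y.1, w, y.2.2), ?_, ?_⟩
    · rw [mem_iff, hF]
      simpa [hw2] using hy
    · rw [hF]
      simp [hw2]
  · intro K hK hKc
    have hset : Dp ∩ F ⁻¹' K = F ⁻¹' K := by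
      ext x
      simp only [Set.mem_inter_iff, Set.mem_preimage, and_iff_right_iff_imp]
      intro hxK
      exact (mem_iff x).2 (hK hxK)
    rw [hset]
    have hcont : Continuous F := by rw [hFeq]; fun_prop
    obtain ⟨M, hM⟩ := hKc.isBounded.subset_closedBall 0
    have hM0 : (0 : ℝ) ≤ max M 0 := le_max_right _ _
    have hsub : F ⁻¹' K ⊆ Metric.closedBall 0 (max (max M 0) (Real.sqrt (max M 0))) := by
      intro x hx
      have h1 : ‖F x‖ ≤ max M 0 :=
        le_trans (mem_closedBall_zero_iff.mp (hM hx)) (le_max_left _ _)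
      rw [hF] at h1
      rw [Prod.norm_def, Prod.norm_def] at h1
      simp only [sup_le_iff] at h1
      obtain ⟨ha, hb, hc⟩ := h1
      have hb' : ‖x.2.1‖ ≤ Real.sqrt (max M 0) := by
        rw [← Real.sqrt_sq (norm_nonneg x.2.1)]
        apply Real.sqrt_le_sqrt
        calc ‖x.2.1‖ ^ 2 = ‖x.2.1 ^ 2‖ := by rw [norm_pow]
        _ ≤ max M 0 := hb
      rw [mem_closedBall_zero_iff, Prod.norm_def, Prod.norm_def]
      exact max_le (le_trans ha (le_max_left _ _))
        (max_le (le_trans hb' (le_max_right _ _)) (le_trans hc (le_max_left _ _)))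
    exact Metric.isCompact_of_isClosed_isBounded (hKc.isClosed.preimage hcont)
      (Metric.isBounded_closedBall.subset hsub)
  · intro hinj
    set a : EuclideanSpace ℂ (Fin n₀) × ℂ × ((i : Fin r) → EuclideanSpace ℂ (Fin (m i))) :=
      (0, (1 / 2 : ℂ), 0) with ha
    set b : EuclideanSpace ℂ (Fin n₀) × ℂ × ((i : Fin r) → EuclideanSpace ℂ (Fin (m i))) :=
      (0, (-(1 / 2) : ℂ), 0) with hb
    have hmem : ∀ c : ℂ, ‖c‖ = 1 / 2 →
        ((0 : EuclideanSpace ℂ (Fin n₀)), c,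
          (0 : (i : Fin r) → EuclideanSpace ℂ (Fin (m i)))) ∈ Dp := by
      intro c hc
      rw [hDp]
      simp only [Set.mem_setOf_eq, hc]
      have hz : ∀ j : Fin r, ‖(0 : (i : Fin r) → EuclideanSpace ℂ (Fin (m i))) j‖
          ^ (2 * p' j) = 0 := by
        intro j
        simp only [Pi.zero_apply, norm_zero]
        exact Real.zero_rpow (by have := hp' j; positivity)
      rw [Finset.sum_congr rfl fun j _ => hz j]
      simp only [Finset.sum_const_zero, add_zero, norm_zero]
      have : ((1 : ℝ) / 2) ^ (2 * p₁) < 1 :=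
        Real.rpow_lt_one (by norm_num) (by norm_num) (by positivity)
      calc ((1 : ℝ) / 2) ^ (2 * p₁) < 1 := this
      _ ≤ Real.exp (-μ * 0 ^ 2) := by norm_num
    have haD : a ∈ Dp := hmem _ (by simp)
    have hbD : b ∈ Dp := hmem _ (by simp)
    have hab : F a = F b := by rw [hF, hF]; norm_num [ha, hb]
    have := hinj haD hbD hab
    rw [ha, hb] at this
    have h2 := congrArg (fun x => x.2.1) this
    norm_num at h2
end

section
/- Let D = {(z,w) ∈ ℂ^{n₀}×ℂ : |w|^{2p} < e^{-μ‖z‖²}} (the case l = 1, n₁ = 1) and define F(z,w) = (√2·z, w²). Then F is a proper holomorphic self-mapping of D that is not an automorphism. -/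
/-!
`F` multiplies `‖z‖²` by `2` and raises `|w|` to the square, so it squares both sides of the
defining inequality of `D`; since both sides are positive, `F x ∈ D ↔ x ∈ D`. Hence `F` maps `D`
into itself and `D ∩ F⁻¹(K) = F⁻¹(K)`, which is compact because `F` is a proper map of the whole
space (a linear isomorphism times `w ↦ w²`). Finally `F (0, 1/2) = F (0, -1/2)`.
-/

open Real

variable {E : Type*} [NormedAddCommGroup E] [NormedSpace ℂ E]

def fockBargmannHartogs (μ p : ℝ) : Set (E × ℂ) :=
  {x | ‖x.2‖ ^ (2 * p) < exp (-μ * ‖x.1‖ ^ 2)}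

noncomputable def sqrtTwoSquareMap (x : E × ℂ) : E × ℂ :=
  ((√2 : ℂ) • x.1, x.2 ^ 2)

lemma norm_sq_rpow_two_mul {R : Type*} [NormedDivisionRing R] (w : R) (p : ℝ) :
    ‖w ^ 2‖ ^ (2 * p) = (‖w‖ ^ (2 * p)) ^ 2 := by
  rw [norm_pow, ← rpow_natCast_mul (norm_nonneg w), ← rpow_mul_natCast (norm_nonneg w)]
  ring_nf

lemma exp_neg_mul_norm_sqrt_two_smul_sq (μ : ℝ) (z : E) :
    exp (-μ * ‖(√2 : ℂ) • z‖ ^ 2) = exp (-μ * ‖z‖ ^ 2) ^ 2 := by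
  rw [norm_smul, Complex.norm_real, norm_of_nonneg (sqrt_nonneg 2), mul_pow,
    sq_sqrt zero_le_two, ← exp_nat_mul]
  ring_nf

lemma sqrtTwoSquareMap_mem_fockBargmannHartogs_iff {μ p : ℝ} {x : E × ℂ} :
    sqrtTwoSquareMap x ∈ fockBargmannHartogs μ p ↔ x ∈ fockBargmannHartogs μ p := by
  simp only [fockBargmannHartogs, sqrtTwoSquareMap, Set.mem_ofPred_eq, norm_sq_rpow_two_mul,
    exp_neg_mul_norm_sqrt_two_smul_sq]
  exact pow_lt_pow_iff_left₀ (rpow_nonneg (norm_nonneg _) _) (exp_pos _).le two_ne_zero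

lemma differentiable_sqrtTwoSquareMap : Differentiable ℂ (sqrtTwoSquareMap (E := E)) :=
  (differentiable_fst.const_smul _).prodMk (differentiable_snd.pow 2)

lemma isProperMap_sq {𝕜 : Type*} [NormedField 𝕜] [ProperSpace 𝕜] :
    IsProperMap fun w : 𝕜 => w ^ 2 := by
  convert (Polynomial.X ^ 2 : Polynomial 𝕜).isProperMap_eval (by simp) using 2
  simp

lemma isProperMap_sqrtTwoSquareMap : IsProperMap (sqrtTwoSquareMap (E := E)) :=
  (isHomeomorph_smul₀ (by simp : (√2 : ℂ) ≠ 0)).isProperMap.prodMap isProperMap_sq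

lemma not_injOn_sqrtTwoSquareMap {μ p : ℝ} (hp : 0 < p) :
    ¬ Set.InjOn (sqrtTwoSquareMap (E := E)) (fockBargmannHartogs μ p) := by
  have mem : ∀ w : ℂ, ‖w‖ = 1 / 2 → ((0 : E), w) ∈ fockBargmannHartogs μ p := fun w hw => by
    simp only [fockBargmannHartogs, Set.mem_ofPred_eq, hw, norm_zero]
    norm_num
    exact rpow_lt_one (by norm_num) (by norm_num) (by positivity)
  intro hinj
  have := hinj (mem (1 / 2) (by norm_num)) (mem (-(1 / 2)) (by norm_num))
    (by simp [sqrtTwoSquareMap])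
  norm_num at this

theorem sqrt2_square_map_proper_self_map_general
    (n₀ : ℕ) (p μ : ℝ) (hp : 0 < p)
    (D : Set (EuclideanSpace ℂ (Fin n₀) × ℂ))
    (hD : D = {x | ‖x.2‖ ^ (2 * p) < Real.exp (-μ * ‖x.1‖ ^ 2)})
    (F : EuclideanSpace ℂ (Fin n₀) × ℂ → EuclideanSpace ℂ (Fin n₀) × ℂ)
    (hF : ∀ x, F x = ((Real.sqrt 2 : ℂ) • x.1, x.2 ^ 2)) :
    Differentiable ℂ F ∧ Set.MapsTo F D D ∧
      (∀ K, K ⊆ D → IsCompact K → IsCompact (D ∩ F ⁻¹' K)) ∧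
      ¬ Set.InjOn F D := by
  obtain rfl : D = fockBargmannHartogs μ p := hD
  obtain rfl : F = sqrtTwoSquareMap := funext hF
  refine ⟨differentiable_sqrtTwoSquareMap,
    fun x hx => sqrtTwoSquareMap_mem_fockBargmannHartogs_iff.2 hx,
    fun K hKD hK => ?_, not_injOn_sqrtTwoSquareMap hp⟩
  have preimage_subset : sqrtTwoSquareMap ⁻¹' K ⊆ fockBargmannHartogs μ p :=
    fun x hx => sqrtTwoSquareMap_mem_fockBargmannHartogs_iff.1 (hKD hx)
  rw [Set.inter_eq_self_of_subset_right preimage_subset]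
  exact isProperMap_sqrtTwoSquareMap.isCompact_preimage hK

/-- Remark 1.10 of Bi–Tu: for `D = {(z,w) ∈ ℂ^{n₀}×ℂ : |w|^{2p} < e^{-μ‖z‖²}}`,
the map `F(z,w) = (√2·z, w²)` is a proper holomorphic self-map of `D` which is
not an automorphism (it is not injective on `D`). -/
theorem sqrt2_square_map_proper_self_map
    (n₀ : ℕ) (p μ : ℝ) (hp : 0 < p) (hμ : 0 < μ)
    (D : Set (EuclideanSpace ℂ (Fin n₀) × ℂ))
    (hD : D = {x | ‖x.2‖ ^ (2 * p) < Real.exp (-μ * ‖x.1‖ ^ 2)})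
    (F : EuclideanSpace ℂ (Fin n₀) × ℂ → EuclideanSpace ℂ (Fin n₀) × ℂ)
    (hF : ∀ x, F x = ((Real.sqrt 2 : ℂ) • x.1, x.2 ^ 2)) :
    Differentiable ℂ F ∧ Set.MapsTo F D D ∧
      (∀ K, K ⊆ D → IsCompact K → IsCompact (D ∩ F ⁻¹' K)) ∧
      ¬ Set.InjOn F D :=
  sqrt2_square_map_proper_self_map_general n₀ p μ hp D hD F hF
end

section
/- Let S₁ be an irreducible algebraic subset of ℂ^{N} of complex dimension N−1 (N = n₀+n₁+⋯+n_l), contained in the generalized Fock-Bargmann-Hartogs domain D = {(z,w) : Σⱼ ‖w_{(j)}‖^{2pⱼ} < e^{-μ‖z‖²}}, and let S' be the closure of S₁ in projective space ℙ^{N} intersected with the affine chart U₁ = {z₁ ≠ 0}, with H₁ = {ζ = 0} the hyperplane at infinity in that chart. Then S' ∩ H₁ ⊆ {ζ = 0, s_{(1)} = ⋯ = s_{(l)} = 0}, so dim(S' ∩ H₁) ≤ n₀ − 1. -/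
open MeasureTheory Real

/-!
Off the hyperplane at infinity the chart inequality bounds every summand by
`e^{-μ‖t'‖²/|ζ|²} ≤ 1`, so `‖s_{(j)}‖ < |ζ|` there. The inequality `‖s_{(j)}‖ ≤ |ζ|` is
closed, hence persists on the closure of `S' ∩ {ζ ≠ 0}`, which contains `S'`; at `ζ = 0` it
forces `s_{(j)} = 0`.
-/

lemma lt_of_sum_rpow_div_rpow_lt_one {ι : Type*} [Fintype ι] {x p : ι → ℝ} {y : ℝ}
    (hx : ∀ i, 0 ≤ x i) (hy : 0 < y) (hp : ∀ i, 0 < p i)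
    (h : ∑ i, x i ^ p i / y ^ p i < 1) (i : ι) : x i < y := by
  have hsingle : x i ^ p i / y ^ p i ≤ ∑ k, x k ^ p k / y ^ p k :=
    Finset.single_le_sum (f := fun k => x k ^ p k / y ^ p k)
      (fun k _ => by have := hx k; positivity) (Finset.mem_univ i)
  have hpow : x i ^ p i < y ^ p i :=
    (div_lt_one (by positivity)).mp (hsingle.trans_lt h)
  exact (rpow_lt_rpow_iff (hx i) hy.le (hp i)).mp hpow

theorem closure_at_infinity_fiber_vanishes_general
    (n₀ l : ℕ) (n : Fin l → ℕ)
    (p : Fin l → ℝ) (hp : ∀ i, 0 < p i) (μ : ℝ) (hμ : 0 < μ)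
    (S' : Set (ℂ × EuclideanSpace ℂ (Fin (n₀ - 1)) ×
      ((i : Fin l) → EuclideanSpace ℂ (Fin (n i)))))
    (hchart : ∀ u ∈ S', u.1 ≠ 0 →
      ∑ j, ‖u.2.2 j‖ ^ (2 * p j) / ‖u.1‖ ^ (2 * p j) <
        Real.exp (-μ * (1 + ‖u.2.1‖ ^ 2) / ‖u.1‖ ^ 2))
    (hdense : S' ⊆ closure (S' ∩ {u | u.1 ≠ 0})) :
    ∀ u ∈ S', u.1 = 0 → u.2.2 = 0 := by
  intro u hu hu1
  funext j
  have hoff : ∀ v ∈ S' ∩ {v | v.1 ≠ 0}, ‖v.2.2 j‖ ≤ ‖v.1‖ := by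
    rintro v ⟨hv, hv1⟩
    have hexp : exp (-μ * (1 + ‖v.2.1‖ ^ 2) / ‖v.1‖ ^ 2) ≤ 1 :=
      exp_le_one_iff.mpr <| div_nonpos_of_nonpos_of_nonneg
        (mul_nonpos_of_nonpos_of_nonneg (neg_nonpos.mpr hμ.le) (by positivity)) (sq_nonneg _)
    exact (lt_of_sum_rpow_div_rpow_lt_one (fun _ => norm_nonneg _) (norm_pos_iff.mpr hv1)
      (fun i => mul_pos two_pos (hp i)) ((hchart v hv hv1).trans_le hexp) j).le
  have hu_le : ‖u.2.2 j‖ ≤ ‖u.1‖ :=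
    le_on_closure hoff (by fun_prop) (by fun_prop) (hdense hu)
  simpa [hu1] using hu_le

/-- The key step in the properness argument of Bi–Tu (Theorem 1.7): in the affine
chart `U₁` of `ℙ^N` with coordinates `(ζ, t, s)` (where `ζ` is the rescaled
hyperplane-at-infinity coordinate and `t' = (1,t)`), the part of the projective
closure `S'` of an algebraic hypersurface `S₁ ⊂ D` lying on the hyperplane at
infinity `H₁ = {ζ = 0}` is contained in `{ζ = 0, s_{(1)} = ⋯ = s_{(l)} = 0}`
(a subspace of dimension `n₀ - 1`): points of `S'` off `H₁` satisfy the chart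
form `Σⱼ ‖s_{(j)}‖^{2pⱼ}/|ζ|^{2pⱼ} < e^{-μ‖t'‖²/|ζ|²}` of the defining
inequality of `D`, and letting `ζ → 0` forces `s → 0`. -/
theorem closure_at_infinity_fiber_vanishes
    (n₀ l : ℕ) (hn₀ : 0 < n₀) (n : Fin l → ℕ) (hn : ∀ i, 0 < n i)
    (p : Fin l → ℝ) (hp : ∀ i, 0 < p i) (μ : ℝ) (hμ : 0 < μ)
    (S' : Set (ℂ × EuclideanSpace ℂ (Fin (n₀ - 1)) ×
      ((i : Fin l) → EuclideanSpace ℂ (Fin (n i)))))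
    (hclosed : IsClosed S')
    (hchart : ∀ u ∈ S', u.1 ≠ 0 →
      ∑ j, ‖u.2.2 j‖ ^ (2 * p j) / ‖u.1‖ ^ (2 * p j) <
        Real.exp (-μ * (1 + ‖u.2.1‖ ^ 2) / ‖u.1‖ ^ 2))
    (hdense : S' ⊆ closure (S' ∩ {u | u.1 ≠ 0})) :
    ∀ u ∈ S', u.1 = 0 → u.2.2 = 0 :=
  closure_at_infinity_fiber_vanishes_general n₀ l n p hp μ hμ S' hchart hdense
end
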